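/- There exists a scalar c₁ ∈ ℝ (depending only on κ and n) such that ∫_{SO_n} A · M_Γ(A) dA = c₁ Γ for every Γ ∈ SO_n, where c₁ is the average of Tr(A)/n against the weight exp(κ Tr(A)/2) over SO_n. -/

import Mathlib

/-!
Write `M = ∫ A e^{κ tr A / 2} dA` (entrywise). Substituting `A ↦ Γ A` turns the integral of the
statement into `Z⁻¹ Γ M`, so it suffices that `M` is a scalar matrix; its scalar is then `tr M / n`.
Left and right invariance of Haar measure, together with `tr (g A gᵀ) = tr A`, make `M` invariant
under conjugation by `SO(n)`. For `n ≥ 3` conjugating by even permutation matrices equalises the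
diagonal entries and conjugating by diagonal sign matrices with two `-1`s kills the off-diagonal
ones. `SO(2)` is abelian, so instead one uses that every `A ∈ SO(2)` is a rotation `R θ`: then
`A₀₀ = A₁₁` and `A₀₁ = -A₁₀` pointwise, and averaging the invariant measure over all rotations
reduces the remaining entry to `∫₀^{2π} sin θ e^{κ cos θ} dθ = 0`.
-/

open Matrix MeasureTheory Real

instance (n : ℕ) : MeasurableSpace (Matrix (Fin n) (Fin n) ℝ) := MeasurableSpace.pi

instance (n : ℕ) : BorelSpace (Matrix (Fin n) (Fin n) ℝ) :=
  inferInstanceAs (BorelSpace (Fin n → Fin n → ℝ))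

namespace Matrix

section Conjugation

variable {ι R : Type*} [Fintype ι] [DecidableEq ι]

lemma permMatrix_mul_mul_transpose [Semiring R] (σ : Equiv.Perm ι) (M : Matrix ι ι R) :
    σ.permMatrix R * M * (σ.permMatrix R)ᵀ = M.submatrix σ σ := by
  rw [← PEquiv.toMatrix_symm, ← Equiv.toPEquiv_symm, PEquiv.toMatrix_toPEquiv_mul,
    PEquiv.mul_toMatrix_toPEquiv, Equiv.symm_symm, submatrix_submatrix]
  rfl

lemma transpose_permMatrix_mul_self [Semiring R] (σ : Equiv.Perm ι) :
    (σ.permMatrix R)ᵀ * σ.permMatrix R = 1 := by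
  simp [← permMatrix_mul]

variable {n : ℕ} [CommRing R] {M : Matrix (Fin n) (Fin n) R}

theorem apply_self_eq_of_forall_conj_eq (hn : 3 ≤ n)
    (hM : ∀ g : Matrix (Fin n) (Fin n) R, gᵀ * g = 1 → g.det = 1 → g * M * gᵀ = M)
    (i j : Fin n) : M i i = M j j := by
  have : MulAction.IsPretransitive (alternatingGroup (Fin n)) (Fin n) :=
    alternatingGroup.isPretransitive_of_three_le_card (Fin n) (by simpa using hn)
  obtain ⟨⟨σ, hσ⟩, hσj⟩ := MulAction.exists_smul_eq (alternatingGroup (Fin n)) j i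
  have hconj := hM (σ.permMatrix R) (transpose_permMatrix_mul_self σ)
    (by rw [det_permutation, Equiv.Perm.mem_alternatingGroup.mp hσ]; simp)
  have := congrFun (congrFun hconj j) j
  rwa [permMatrix_mul_mul_transpose, submatrix_apply, show σ j = i from hσj] at this

theorem apply_eq_zero_of_forall_conj_eq [NoZeroDivisors R] [CharZero R] (hn : 3 ≤ n)
    (hM : ∀ g : Matrix (Fin n) (Fin n) R, gᵀ * g = 1 → g.det = 1 → g * M * gᵀ = M)
    {i j : Fin n} (hij : i ≠ j) : M i j = 0 := by
  obtain ⟨k, hki, hkj⟩ := Fin.exists_ne_and_ne_of_two_lt i j hn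
  set d : Fin n → R := fun l => (if l = i then -1 else 1) * (if l = k then -1 else 1) with hd
  have hdd : ∀ l, d l * d l = 1 := fun l => by simp only [hd]; split_ifs <;> ring
  have hconj := hM (diagonal d) (by simp [diagonal_mul_diagonal, hdd])
    (by rw [det_diagonal, Finset.prod_mul_distrib]; simp [Finset.prod_ite_eq'])
  have := congrFun (congrFun hconj i) j
  simp only [hd, mul_ite, mul_neg, mul_one, diagonal_transpose, mul_diagonal, diagonal_mul,
    hki.symm, ↓reduceIte, neg_mul, one_mul, hkj.symm, hij.symm] at this
  exact CharZero.neg_eq_self_iff.mp this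

end Conjugation

lemma eq_trace_div_smul_one {K : Type*} [Field K] [CharZero K] {n : ℕ}
    {M : Matrix (Fin n) (Fin n) K} (hdiag : ∀ i j, M i i = M j j)
    (hoff : ∀ i j, i ≠ j → M i j = 0) : M = (M.trace / n) • 1 := by
  ext i j
  have htrace : M.trace = n * M i i := by
    simp [trace, hdiag _ i]
  have hn : (n : K) ≠ 0 := Nat.cast_ne_zero.mpr (Fin.pos i).ne'
  rcases eq_or_ne i j with rfl | hij
  · simp [htrace, hn]
  · simp [hoff i j hij, hij]

lemma abs_apply_le_one_of_transpose_mul_self {n : ℕ} {A : Matrix (Fin n) (Fin n) ℝ}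
    (hA : Aᵀ * A = 1) (i j : Fin n) : |A i j| ≤ 1 := by
  have hU : A ∈ unitaryGroup (Fin n) ℝ := by
    rwa [mem_unitaryGroup_iff', star_eq_conjTranspose, conjTranspose_eq_transpose_of_trivial]
  exact entry_norm_bound_of_unitary hU i j

end Matrix

lemma MeasureTheory.MeasurePreserving.integral_comp_of_aestronglyMeasurable
    {α β E : Type*} [MeasurableSpace α] [MeasurableSpace β] [NormedAddCommGroup E]
    [NormedSpace ℝ E] {μ : Measure α} {ν : Measure β} {T : α → β}
    (hT : MeasurePreserving T μ ν) {f : β → E} (hf : AEStronglyMeasurable f ν) :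
    ∫ x, f (T x) ∂μ = ∫ y, f y ∂ν := by
  rw [← integral_map hT.aemeasurable (by rwa [hT.map_eq]), hT.map_eq]

namespace VonMises

noncomputable def rot (θ : ℝ) : Matrix (Fin 2) (Fin 2) ℝ :=
  !![cos θ, -sin θ; sin θ, cos θ]

lemma rot_zero : rot 0 = 1 := by
  simp [rot, one_fin_two]

lemma rot_add (θ φ : ℝ) : rot (θ + φ) = rot θ * rot φ := by
  ext i j
  fin_cases i <;> fin_cases j <;> simp [rot, mul_apply, cos_add, sin_add] <;> ring

lemma transpose_rot (θ : ℝ) : (rot θ)ᵀ = rot (-θ) := by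
  ext i j
  fin_cases i <;> fin_cases j <;> simp [rot]

lemma transpose_rot_mul_rot (θ : ℝ) : (rot θ)ᵀ * rot θ = 1 := by
  rw [transpose_rot, ← rot_add, neg_add_cancel, rot_zero]

lemma det_rot (θ : ℝ) : (rot θ).det = 1 := by
  rw [rot, det_fin_two_of]
  nlinarith [sin_sq_add_cos_sq θ]

lemma trace_rot (θ : ℝ) : (rot θ).trace = 2 * cos θ := by
  rw [rot, trace_fin_two_of]
  ring

lemma rot_periodic : Function.Periodic rot (2 * π) := fun θ => by
  simp [rot]

lemma continuous_rot : Continuous rot := by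
  unfold rot
  fun_prop

lemma exists_eq_rot {A : Matrix (Fin 2) (Fin 2) ℝ} (hA : Aᵀ * A = 1) (hdet : A.det = 1) :
    ∃ θ, A = rot θ := by
  have h00 := congrFun (congrFun hA 0) 0
  have h01 := congrFun (congrFun hA 0) 1
  simp only [mul_apply, Fin.sum_univ_two, transpose_apply, one_apply_eq, one_apply_ne zero_ne_one]
    at h00 h01
  rw [det_fin_two] at hdet
  have h11 : A 1 1 = A 0 0 := by
    linear_combination A 0 0 * hdet + A 1 0 * h01 - A 1 1 * h00
  have h01' : A 0 1 = -A 1 0 := by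
    linear_combination A 0 0 * h01 - A 0 1 * h00 - A 1 0 * hdet
  set z : ℂ := ⟨A 0 0, A 1 0⟩
  have hz : ‖z‖ = 1 := by rw [Complex.norm_def, Complex.normSq_mk, h00, sqrt_one]
  have hcos := Complex.cos_arg (norm_ne_zero_iff.mp (hz ▸ one_ne_zero))
  have hsin := Complex.sin_arg z
  rw [hz, div_one] at hcos hsin
  refine ⟨z.arg, ?_⟩
  ext i j
  fin_cases i <;> fin_cases j <;> simp [rot, hcos, hsin, h11, h01', z]

lemma integral_sin_mul_comp_cos (g : ℝ → ℝ) :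
    ∫ θ in 0..2 * π, sin θ * g (cos θ) = 0 := by
  have h := intervalIntegral.integral_comp_sub_left (fun θ => sin θ * g (cos θ)) (2 * π)
    (a := 0) (b := 2 * π)
  simp only [sub_self, sub_zero, sin_two_pi_sub, cos_two_pi_sub, neg_mul,
    intervalIntegral.integral_neg] at h
  linarith

lemma integral_rot_mul_rot (f : Matrix (Fin 2) (Fin 2) ℝ → ℝ) (φ : ℝ) :
    ∫ θ in 0..2 * π, f (rot θ * rot φ) = ∫ θ in 0..2 * π, f (rot θ) := by
  simp_rw [← rot_add]
  rw [intervalIntegral.integral_comp_add_right (fun θ => f (rot θ)), zero_add, add_comm]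
  simpa only [zero_add, Function.comp_apply] using
    (rot_periodic.comp f).intervalIntegral_add_eq φ 0

theorem integral_eq_circleAverage {μ : Measure (Matrix (Fin 2) (Fin 2) ℝ)} [SFinite μ]
    (hsupp : ∀ᵐ A ∂μ, Aᵀ * A = 1 ∧ A.det = 1)
    (hinv : ∀ θ, MeasurePreserving (rot θ * ·) μ μ)
    {f : Matrix (Fin 2) (Fin 2) ℝ → ℝ} (hf : Integrable f μ) :
    2 * π * ∫ A, f A ∂μ = μ.real Set.univ * ∫ θ in 0..2 * π, f (rot θ) := by
  let ν : Measure ℝ := volume.restrict (Set.Ioc 0 (2 * π))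
  have hskew : MeasurePreserving (fun p : ℝ × Matrix (Fin 2) (Fin 2) ℝ => (p.1, rot p.1 * p.2))
      (ν.prod μ) (ν.prod μ) :=
    (MeasurePreserving.id ν).skew_product
      ((continuous_rot.comp continuous_fst).matrix_mul continuous_snd).measurable
      (.of_forall fun θ => (hinv θ).map_eq)
  have hF : Integrable (fun p : ℝ × Matrix (Fin 2) (Fin 2) ℝ => f p.2) (ν.prod μ) :=
    hf.comp_snd ν
  have hG : Integrable (fun p : ℝ × Matrix (Fin 2) (Fin 2) ℝ => f (rot p.1 * p.2))
      (ν.prod μ) :=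
    hskew.integrable_comp_of_integrable hF
  calc 2 * π * ∫ A, f A ∂μ = ∫ p, f p.2 ∂(ν.prod μ) := by
        rw [integral_fun_snd, smul_eq_mul, measureReal_restrict_apply_univ, Real.volume_real_Ioc,
          sub_zero, max_eq_left two_pi_pos.le]
    _ = ∫ p, f (rot p.1 * p.2) ∂(ν.prod μ) :=
        (hskew.integral_comp_of_aestronglyMeasurable (f := fun p => f p.2)
          hF.aestronglyMeasurable).symm
    _ = ∫ A, ∫ θ, f (rot θ * A) ∂ν ∂μ := integral_prod_symm _ hG
    _ = ∫ _A, (∫ θ in 0..2 * π, f (rot θ)) ∂μ := by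
        refine integral_congr_ae (hsupp.mono fun A hA => ?_)
        obtain ⟨φ, rfl⟩ := exists_eq_rot hA.1 hA.2
        rw [← integral_rot_mul_rot f φ, intervalIntegral.integral_of_le two_pi_pos.le]
    _ = _ := by rw [integral_const, smul_eq_mul]

noncomputable def firstMoment {n : ℕ} (μ : Measure (Matrix (Fin n) (Fin n) ℝ))
    (h : ℝ → ℝ) : Matrix (Fin n) (Fin n) ℝ :=
  of fun i j => ∫ A, A i j * h A.trace ∂μ

section FirstMoment

variable {n : ℕ} {μ : Measure (Matrix (Fin n) (Fin n) ℝ)} {h : ℝ → ℝ}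

lemma integrable_apply_mul_trace (horth : ∀ᵐ A ∂μ, Aᵀ * A = 1)
    (hh : Integrable (fun A => h A.trace) μ) (i j : Fin n) :
    Integrable (fun A => A i j * h A.trace) μ :=
  hh.bdd_mul (c := 1)
    (by fun_prop : Continuous fun A : Matrix (Fin n) (Fin n) ℝ => A i j).aestronglyMeasurable
    (horth.mono fun _ hA => abs_apply_le_one_of_transpose_mul_self hA i j)

lemma integral_mul_mul_apply_mul_trace (horth : ∀ᵐ A ∂μ, Aᵀ * A = 1)
    (hh : Integrable (fun A => h A.trace) μ) (P Q : Matrix (Fin n) (Fin n) ℝ) (i j : Fin n) :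
    ∫ A, (P * A * Q) i j * h A.trace ∂μ = (P * firstMoment μ h * Q) i j := by
  have hexpand : ∀ A : Matrix (Fin n) (Fin n) ℝ, (P * A * Q) i j * h A.trace =
      ∑ l, ∑ k, P i k * Q l j * (A k l * h A.trace) := fun A => by
    simp only [mul_apply, Finset.sum_mul]
    exact Finset.sum_congr rfl fun _ _ => Finset.sum_congr rfl fun _ _ => by ring
  have hint := integrable_apply_mul_trace horth hh
  simp_rw [hexpand]
  rw [integral_finsetSum _ fun l _ => integrable_finsetSum _ fun k _ => (hint k l).const_mul _]
  simp_rw [integral_finsetSum _ fun k _ => (hint k _).const_mul _, integral_const_mul]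
  simp only [mul_apply, firstMoment, of_apply, Finset.sum_mul]
  exact Finset.sum_congr rfl fun _ _ => Finset.sum_congr rfl fun _ _ => by ring

lemma integral_trace_mul_trace (horth : ∀ᵐ A ∂μ, Aᵀ * A = 1)
    (hh : Integrable (fun A => h A.trace) μ) :
    ∫ A, A.trace * h A.trace ∂μ = (firstMoment μ h).trace := by
  simp only [trace, diag, Finset.sum_mul]
  exact integral_finsetSum _ fun i _ => integrable_apply_mul_trace horth hh i i

lemma conj_firstMoment (horth : ∀ᵐ A ∂μ, Aᵀ * A = 1)
    (hinvL : ∀ g : Matrix (Fin n) (Fin n) ℝ, gᵀ * g = 1 → g.det = 1 →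
      MeasurePreserving (fun A => g * A) μ μ)
    (hinvR : ∀ g : Matrix (Fin n) (Fin n) ℝ, gᵀ * g = 1 → g.det = 1 →
      MeasurePreserving (fun A => A * g) μ μ)
    (hh : Integrable (fun A => h A.trace) μ) {g : Matrix (Fin n) (Fin n) ℝ}
    (hg : gᵀ * g = 1) (hgdet : g.det = 1) :
    g * firstMoment μ h * gᵀ = firstMoment μ h := by
  have hgT : gᵀᵀ * gᵀ = 1 := by rw [transpose_transpose, mul_eq_one_comm.mp hg]
  have hconj : MeasurePreserving (fun A => g * A * gᵀ) μ μ :=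
    (hinvR gᵀ hgT (by rwa [det_transpose])).comp (hinvL g hg hgdet)
  ext i j
  rw [← integral_mul_mul_apply_mul_trace horth hh, firstMoment, of_apply,
    ← hconj.integral_comp_of_aestronglyMeasurable
      (integrable_apply_mul_trace horth hh i j).aestronglyMeasurable]
  congr 1 with A
  rw [trace_mul_cycle, hg, one_mul]

lemma firstMoment_one_zero_eq_zero {μ : Measure (Matrix (Fin 2) (Fin 2) ℝ)} [SFinite μ]
    (hsupp : ∀ᵐ A ∂μ, Aᵀ * A = 1 ∧ A.det = 1)
    (hinvL : ∀ g : Matrix (Fin 2) (Fin 2) ℝ, gᵀ * g = 1 → g.det = 1 →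
      MeasurePreserving (fun A => g * A) μ μ)
    (hh : Integrable (fun A => h A.trace) μ) :
    firstMoment μ h 1 0 = 0 := by
  have havg := integral_eq_circleAverage hsupp
    (fun θ => hinvL _ (transpose_rot_mul_rot θ) (det_rot θ))
    (integrable_apply_mul_trace (hsupp.mono fun _ hA => hA.1) hh 1 0)
  have hodd : ∫ θ in 0..2 * π, rot θ 1 0 * h (rot θ).trace = 0 := by
    have hsin : ∀ θ, rot θ 1 0 = sin θ := fun _ => rfl
    simpa only [trace_rot, hsin] using integral_sin_mul_comp_cos (fun c => h (2 * c))
  rw [hodd, mul_zero] at havg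
  exact (mul_eq_zero.mp havg).resolve_left two_pi_pos.ne'

theorem firstMoment_eq_smul_one [SFinite μ] (hsupp : ∀ᵐ A ∂μ, Aᵀ * A = 1 ∧ A.det = 1)
    (hinvL : ∀ g : Matrix (Fin n) (Fin n) ℝ, gᵀ * g = 1 → g.det = 1 →
      MeasurePreserving (fun A => g * A) μ μ)
    (hinvR : ∀ g : Matrix (Fin n) (Fin n) ℝ, gᵀ * g = 1 → g.det = 1 →
      MeasurePreserving (fun A => A * g) μ μ)
    (hh : Integrable (fun A => h A.trace) μ) :
    firstMoment μ h = ((firstMoment μ h).trace / n) • 1 := by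
  have horth : ∀ᵐ A ∂μ, Aᵀ * A = 1 := hsupp.mono fun _ hA => hA.1
  set M := firstMoment μ h
  suffices hM : (∀ i j, M i i = M j j) ∧ ∀ i j, i ≠ j → M i j = 0 from
    eq_trace_div_smul_one hM.1 hM.2
  obtain hn | rfl | hn : n ≤ 1 ∨ n = 2 ∨ 3 ≤ n := by omega
  · have : Subsingleton (Fin n) := Fin.subsingleton_iff_le_one.mpr hn
    exact ⟨fun i j => by rw [Subsingleton.elim i j],
      fun i j hij => absurd (Subsingleton.elim i j) hij⟩
  · have hrot : ∀ᵐ A ∂μ, A 1 1 = A 0 0 ∧ A 0 1 = -A 1 0 := hsupp.mono fun A hA => by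
      obtain ⟨θ, rfl⟩ := exists_eq_rot hA.1 hA.2
      simp [rot]
    have h11 : M 1 1 = M 0 0 := integral_congr_ae (hrot.mono fun A hA => by simp only [hA.1])
    have h10 : M 1 0 = 0 := firstMoment_one_zero_eq_zero hsupp hinvL hh
    have h01 : M 0 1 = -M 1 0 :=
      (integral_congr_ae (hrot.mono fun A hA => by simp only [hA.2, neg_mul])).trans
        (integral_neg _)
    refine ⟨fun i j => ?_, fun i j hij => ?_⟩ <;> fin_cases i <;> fin_cases j <;> simp_all
  · have hconj := fun g (hg : gᵀ * g = 1) hgdet => conj_firstMoment horth hinvL hinvR hh hg hgdet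
    exact ⟨apply_self_eq_of_forall_conj_eq hn hconj,
      fun _ _ => apply_eq_zero_of_forall_conj_eq hn hconj⟩

end FirstMoment

end VonMises

open VonMises

theorem integral_A_vonMises_general (n : ℕ) (κ : ℝ)
    (μ : Measure (Matrix (Fin n) (Fin n) ℝ)) [IsProbabilityMeasure μ]
    (hsupp : ∀ᵐ A ∂μ, Aᵀ * A = 1 ∧ A.det = 1)
    (hinvL : ∀ g : Matrix (Fin n) (Fin n) ℝ, gᵀ * g = 1 → g.det = 1 →
      MeasurePreserving (fun A => g * A) μ μ)
    (hinvR : ∀ g : Matrix (Fin n) (Fin n) ℝ, gᵀ * g = 1 → g.det = 1 →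
      MeasurePreserving (fun A => A * g) μ μ)
    (hint : Integrable (fun A : Matrix (Fin n) (Fin n) ℝ => Real.exp (κ * A.trace / 2)) μ) :
    ∃ c₁ : ℝ,
      c₁ = (∫ A, (A.trace / (n : ℝ)) * Real.exp (κ * A.trace / 2) ∂μ) /
            (∫ A, Real.exp (κ * A.trace / 2) ∂μ) ∧
      ∀ Γ : Matrix (Fin n) (Fin n) ℝ, Γᵀ * Γ = 1 → Γ.det = 1 →
        (Matrix.of fun i j => ∫ A, A i j *
            ((∫ B, Real.exp (κ * B.trace / 2) ∂μ)⁻¹ *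
              Real.exp (κ * ((1 / 2) * (Γᵀ * A).trace))) ∂μ) = c₁ • Γ := by
  have horth : ∀ᵐ A ∂μ, Aᵀ * A = 1 := hsupp.mono fun _ hA => hA.1
  have hM := firstMoment_eq_smul_one (h := fun t => exp (κ * t / 2)) hsupp hinvL hinvR hint
  have htrace := integral_trace_mul_trace (h := fun t => exp (κ * t / 2)) horth hint
  set Z := ∫ B, exp (κ * B.trace / 2) ∂μ
  set M := firstMoment μ fun t => exp (κ * t / 2)
  have hc : ∫ A, A.trace / n * exp (κ * A.trace / 2) ∂μ = M.trace / n := by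
    rw [← htrace, ← integral_div]
    congr 1 with A
    ring
  refine ⟨_, rfl, fun Γ hΓ hΓdet => ?_⟩
  ext i j
  calc _ = ∫ A, (Γ * A) i j * (Z⁻¹ * exp (κ * (1 / 2 * (Γᵀ * (Γ * A)).trace))) ∂μ :=
        ((hinvL Γ hΓ hΓdet).integral_comp_of_aestronglyMeasurable
          (by fun_prop : Continuous fun A : Matrix (Fin n) (Fin n) ℝ =>
            A i j * (Z⁻¹ * exp (κ * (1 / 2 * (Γᵀ * A).trace)))).aestronglyMeasurable).symm
    _ = Z⁻¹ * ∫ A, (Γ * A * 1 : Matrix (Fin n) (Fin n) ℝ) i j * exp (κ * A.trace / 2) ∂μ := by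
        rw [← integral_const_mul]
        congr 1 with A
        rw [← Matrix.mul_assoc, hΓ, Matrix.one_mul, Matrix.mul_one]
        ring_nf
    _ = Z⁻¹ * (Γ * M * 1 : Matrix (Fin n) (Fin n) ℝ) i j :=
        congrArg (Z⁻¹ * ·) (integral_mul_mul_apply_mul_trace (h := fun t => exp (κ * t / 2))
          horth hint Γ 1 i j)
    _ = _ := by
        rw [Matrix.mul_one, hc]
        conv_lhs => rw [hM]
        simp only [Algebra.mul_smul_comm, mul_one, Matrix.smul_apply, smul_eq_mul]
        ring

/-- There is a scalar `c₁` (depending only on `κ` and `n`), namely the average of `Tr(A)/n`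
against the weight `exp(κ Tr(A)/2)` over `SO_n`, such that
`∫_{SO_n} A M_Γ(A) dA = c₁ Γ` for every `Γ ∈ SO_n`. -/
theorem integral_A_vonMises (n : ℕ) (hn : 0 < n) (κ : ℝ) (hκ : 0 < κ)
    (μ : Measure (Matrix (Fin n) (Fin n) ℝ)) [IsProbabilityMeasure μ]
    (hsupp : ∀ᵐ A ∂μ, Aᵀ * A = 1 ∧ A.det = 1)
    (hinvL : ∀ g : Matrix (Fin n) (Fin n) ℝ, gᵀ * g = 1 → g.det = 1 →
      MeasurePreserving (fun A => g * A) μ μ)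
    (hinvR : ∀ g : Matrix (Fin n) (Fin n) ℝ, gᵀ * g = 1 → g.det = 1 →
      MeasurePreserving (fun A => A * g) μ μ)
    (hint : Integrable (fun A : Matrix (Fin n) (Fin n) ℝ => Real.exp (κ * A.trace / 2)) μ) :
    ∃ c₁ : ℝ,
      c₁ = (∫ A, (A.trace / (n : ℝ)) * Real.exp (κ * A.trace / 2) ∂μ) /
            (∫ A, Real.exp (κ * A.trace / 2) ∂μ) ∧
      ∀ Γ : Matrix (Fin n) (Fin n) ℝ, Γᵀ * Γ = 1 → Γ.det = 1 →
        (Matrix.of fun i j => ∫ A, A i j *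
            ((∫ B, Real.exp (κ * B.trace / 2) ∂μ)⁻¹ *
              Real.exp (κ * ((1 / 2) * (Γᵀ * A).trace))) ∂μ) = c₁ • Γ :=
  integral_A_vonMises_general n κ μ hsupp hinvL hinvR hint
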